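/- Let Q be a finite quiver with no directed cycles and with exactly one sink s (a vertex with no outgoing arrows), and let R be a set of 2-cells on Q such that the outgoing link of every vertex is connected. Then the quotient of the free groupoid on Q by the relations p = q for all {p, q} ∈ R is thin: any two parallel morphisms in this quotient groupoid are equal. Equivalently, any two parallel (undirected) combinatorial paths in Q are combinatorially homotopic with respect to R. -/

import Mathlib

/-!
Every vertex has a directed path to the sink `s`, and any two such paths become equal in the
quotient. This is proved by well-founded induction along the arrows (finiteness and acyclicity):
paths starting with the same arrow agree by induction; if two arrows out of `x` are adjacent in
the link, the 2-cell witnessing it, continued by any path to `s`, identifies the paths starting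
with them; and link connectivity reaches any pair of first arrows. Choosing a path `π x` to `s`
for every `x`, each arrow `e : a ⟶ b` then satisfies `[e] ≫ [π b] = [π a]`, so every morphism
`X ⟶ Y` of the quotient groupoid equals `[π X] ≫ [π Y]⁻¹`.
-/


namespace Stmt6

open Quiver CategoryTheory

universe u v
variable {V : Type u} [Quiver.{v + 1} V]

/-- A directed path in a quiver, viewed as a morphism of the free groupoid on the quiver. -/
def evalPath {x y : V} (p : Quiver.Path x y) :
    (Quiver.FreeGroupoid.of V).obj x ⟶ (Quiver.FreeGroupoid.of V).obj y :=
  CategoryTheory.composePath ((Quiver.FreeGroupoid.of V).mapPath p)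

/-- The relations `p = q`, for all 2-cells `{p, q} ∈ R`, viewed as a family of relations on
the hom-sets of the free groupoid on the quiver. -/
inductive GammaRel (R : ∀ ⦃x y : V⦄, Quiver.Path x y → Quiver.Path x y → Prop) :
    HomRel (Quiver.FreeGroupoid V)
  | mk {x y : V} {p q : Quiver.Path x y} (h : R p q) : GammaRel R (evalPath p) (evalPath q)

/-- The first arrow of a directed path (as an arrow out of the source vertex),
`none` for the empty path. -/
def firstArrow : ∀ {x z : V}, Quiver.Path x z → Option (Σ y : V, x ⟶ y)
  | _, _, Quiver.Path.nil => none
  | _, _, Quiver.Path.cons Quiver.Path.nil e => some ⟨_, e⟩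
  | _, _, Quiver.Path.cons (Quiver.Path.cons p e') _ => firstArrow (Quiver.Path.cons p e')

/-- The directed path `p` begins with the arrow `e`. -/
def StartsWith {x z : V} (p : Quiver.Path x z) (e : Σ y : V, x ⟶ y) : Prop :=
  firstArrow p = some e

/-- Two arrows `e`, `e'` out of `x` are adjacent in the outgoing link of `x` if some
2-cell `{r, r'} ∈ R` has both its paths starting at `x`, with `r` beginning with `e`
and `r'` beginning with `e'`. -/
def LinkAdj (R : ∀ ⦃x y : V⦄, Quiver.Path x y → Quiver.Path x y → Prop)
    {x : V} (e e' : Σ y : V, x ⟶ y) : Prop :=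
  ∃ (z : V) (r r' : Quiver.Path x z), R r r' ∧ StartsWith r e ∧ StartsWith r' e'

/-- The outgoing link of `x` is connected: any two arrows out of `x` are related by a
chain of (undirected) adjacencies. -/
def LinkConnected (R : ∀ ⦃x y : V⦄, Quiver.Path x y → Quiver.Path x y → Prop) (x : V) : Prop :=
  ∀ e e' : Σ y : V, x ⟶ y,
    Relation.ReflTransGen (fun a b => LinkAdj R a b ∨ LinkAdj R b a) e e'

theorem evalPath_comp {x y z : V} (p : Path x y) (q : Path y z) :
    evalPath (p.comp q) = evalPath p ≫ evalPath q := by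
  rw [evalPath, evalPath, evalPath, Prefunctor.mapPath_comp, composePath_comp]

theorem evalPath_toPath {x y : V} (e : x ⟶ y) :
    evalPath e.toPath = (FreeGroupoid.of V).map e := by
  rw [evalPath, Prefunctor.mapPath_toPath, composePath_toPath]

theorem firstArrow_toPath_comp {x y z : V} (e : x ⟶ y) (p : Path y z) :
    firstArrow (e.toPath.comp p) = some ⟨y, e⟩ := by
  induction p with
  | nil => simp only [Path.comp_nil, Hom.toPath, firstArrow]
  | cons p f ih =>
    cases p with
    | nil => simp only [Path.comp_cons, Path.comp_nil, Hom.toPath, firstArrow]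
    | cons p g => simpa only [Path.comp_cons, firstArrow] using ih

theorem StartsWith.exists_eq_toPath_comp {x z : V} {p : Path x z} {e : Σ y : V, x ⟶ y}
    (h : StartsWith p e) : ∃ p' : Path e.1 z, p = e.2.toPath.comp p' := by
  have hp : p.length ≠ 0 := by
    cases p with
    | nil => simp [StartsWith, firstArrow] at h
    | cons => simp
  obtain ⟨y, e', p', rfl, -⟩ := (Path.length_ne_zero_iff_eq_comp p).1 hp
  rw [StartsWith, firstArrow_toPath_comp, Option.some_inj] at h
  subst h
  exact ⟨p', rfl⟩

theorem wellFounded_of_acyclic [Finite V] (hacyclic : ∀ (x : V) (p : Path x x), p.length = 0) :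
    WellFounded fun a b : V => Nonempty (b ⟶ a) := by
  let r := fun a b : V => ∃ p : Path b a, p.length ≠ 0
  have : IsTrans V r := ⟨fun _ _ _ ⟨p, hp⟩ ⟨q, _⟩ => ⟨q.comp p, by simp [hp]⟩⟩
  have : Std.Irrefl r := ⟨fun a ⟨p, hp⟩ => hp (hacyclic a p)⟩
  exact Subrelation.wf (fun ⟨e⟩ => ⟨e.toPath, by simp⟩) (Finite.wellFounded_of_trans_of_irrefl r)

theorem exists_path_to_sink [Finite V] (hacyclic : ∀ (x : V) (p : Path x x), p.length = 0)
    {s : V} (huniq : ∀ t : V, (∀ y : V, IsEmpty (t ⟶ y)) → t = s) (x : V) :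
    Nonempty (Path x s) := by
  induction x using (wellFounded_of_acyclic hacyclic).induction with
  | _ x ih =>
    by_cases hx : ∀ y : V, IsEmpty (x ⟶ y)
    · exact huniq x hx ▸ ⟨Path.nil⟩
    · push Not at hx
      obtain ⟨y, ⟨e⟩⟩ := hx
      obtain ⟨p⟩ := ih y ⟨e⟩
      exact ⟨e.toPath.comp p⟩

theorem FreeGroupoid.map_eq_comp_inv {G : Type*} [Groupoid G] (F : Quiver.FreeGroupoid V ⥤ G)
    {c : G} (N : ∀ X : Quiver.FreeGroupoid V, F.obj X ⟶ c)
    (hN : ∀ {a b : V} (e : a ⟶ b),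
      F.map ((FreeGroupoid.of V).map e) ≫ N ((FreeGroupoid.of V).obj b) =
        N ((FreeGroupoid.of V).obj a))
    {X Y : Quiver.FreeGroupoid V} (f : X ⟶ Y) : F.map f = N X ≫ inv (N Y) := by
  let Ψ : Quiver.FreeGroupoid V ⥤ G :=
    { obj := F.obj
      map := fun {X Y} _ => N X ≫ inv (N Y) }
  have hF : F = FreeGroupoid.lift (FreeGroupoid.of V ⋙q F.toPrefunctor) :=
    FreeGroupoid.lift_unique _ _ rfl
  have hΨ : Ψ = FreeGroupoid.lift (FreeGroupoid.of V ⋙q F.toPrefunctor) :=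
    FreeGroupoid.lift_unique _ _ <| Prefunctor.ext (fun _ => rfl) fun _ _ e =>
      ((IsIso.eq_comp_inv _).2 (hN e)).symm
  simpa [Ψ] using Functor.congr_hom (hF.trans hΨ.symm) f

section PathClass

variable (R : ∀ ⦃x y : V⦄, Path x y → Path x y → Prop)

abbrev pathClass {x y : V} (p : Path x y) :
    (Quotient.functor (GammaRel R)).obj ((FreeGroupoid.of V).obj x) ⟶
      (Quotient.functor (GammaRel R)).obj ((FreeGroupoid.of V).obj y) :=
  (Quotient.functor (GammaRel R)).map (evalPath p)

theorem pathClass_comp {x y z : V} (p : Path x y) (q : Path y z) :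
    pathClass R (p.comp q) = pathClass R p ≫ pathClass R q := by
  rw [pathClass, evalPath_comp, Functor.map_comp]

theorem pathClass_eq_of_rel {x y : V} {p q : Path x y} (h : R p q) :
    pathClass R p = pathClass R q :=
  CategoryTheory.Quotient.sound _ (GammaRel.mk h)

def PathsAgree (x y : V) : Prop :=
  ∀ p q : Path x y, pathClass R p = pathClass R q

theorem pathClass_toPath_comp_eq {x s : V} (hpath : ∀ z, Nonempty (Path z s))
    (hlink : LinkConnected R x) (ih : ∀ y, (x ⟶ y) → PathsAgree R y s)
    (e e' : Σ y : V, x ⟶ y) (p : Path e.1 s) (p' : Path e'.1 s) :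
    pathClass R (e.2.toPath.comp p) = pathClass R (e'.2.toPath.comp p') := by
  let π z : Path z s := (hpath z).some
  let c (e : Σ y : V, x ⟶ y) := pathClass R (e.2.toPath.comp (π e.1))
  have hc (e : Σ y : V, x ⟶ y) (p : Path e.1 s) : pathClass R (e.2.toPath.comp p) = c e := by
    simp only [c, pathClass_comp, ih _ e.2 p (π e.1)]
  have hc_comp (e : Σ y : V, x ⟶ y) {z : V} (r : Path e.1 z) :
      c e = pathClass R (e.2.toPath.comp r) ≫ pathClass R (π z) := by
    rw [← hc e (r.comp (π z)), ← pathClass_comp, Path.comp_assoc]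
  have hadj (e e' : Σ y : V, x ⟶ y) (h : LinkAdj R e e') : c e = c e' := by
    obtain ⟨z, r, r', hr, he, he'⟩ := h
    obtain ⟨r₁, rfl⟩ := he.exists_eq_toPath_comp
    obtain ⟨r₁', rfl⟩ := he'.exists_eq_toPath_comp
    rw [hc_comp e r₁, hc_comp e' r₁', pathClass_eq_of_rel R hr]
  have hce (e e' : Σ y : V, x ⟶ y) : c e = c e' := by
    induction hlink e e' with
    | refl => rfl
    | tail _ h ih => exact ih.trans (h.elim (hadj _ _) fun h => (hadj _ _ h).symm)
  rw [hc, hc, hce e e']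

theorem pathsAgree_sink [Finite V] (hacyclic : ∀ (x : V) (p : Path x x), p.length = 0)
    {s : V} (huniq : ∀ t : V, (∀ y : V, IsEmpty (t ⟶ y)) → t = s)
    (hlink : ∀ x : V, LinkConnected R x) (x : V) : PathsAgree R x s := by
  induction x using (wellFounded_of_acyclic hacyclic).induction with
  | _ x ih =>
    intro p q
    by_cases hx : x = s
    · subst hx
      rw [p.eq_nil_of_length_zero (hacyclic _ p), q.eq_nil_of_length_zero (hacyclic _ q)]
    · have hlen (p : Path x s) : p.length ≠ 0 := fun h => hx (p.eq_of_length_zero h)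
      obtain ⟨y, e, p', rfl, -⟩ := (Path.length_ne_zero_iff_eq_comp p).1 (hlen p)
      obtain ⟨y', e', q', rfl, -⟩ := (Path.length_ne_zero_iff_eq_comp q).1 (hlen q)
      exact pathClass_toPath_comp_eq R (exists_path_to_sink hacyclic huniq) (hlink x)
        (fun y e => ih y ⟨e⟩) ⟨y, e⟩ ⟨y', e'⟩ p' q'

end PathClass

/-- **Theorem 1.5 (combinatorial form).**  Let `Q` be a finite quiver with no directed
cycles and exactly one sink `s`, and let `R` be a set of 2-cells on `Q` such that the
outgoing link of every vertex is connected.  Then the quotient of the free groupoid on `Q`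
by the relations `p = q`, for all 2-cells `{p, q} ∈ R`, is thin: any two parallel morphisms
in the quotient groupoid are equal.  (Equivalently, any two parallel undirected
combinatorial paths on `Q` are combinatorially homotopic with respect to `R`.) -/
theorem quotient_freeGroupoid_thin
    {V : Type u} [Quiver.{v + 1} V] [Finite V] [∀ a b : V, Finite (a ⟶ b)]
    (R : ∀ ⦃x y : V⦄, Quiver.Path x y → Quiver.Path x y → Prop)
    (hsymm : ∀ ⦃x y : V⦄ (p q : Quiver.Path x y), R p q → R q p)
    (hnonempty : ∀ ⦃x y : V⦄ (p q : Quiver.Path x y), R p q → p.length ≠ 0 ∧ q.length ≠ 0)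
    (hacyclic : ∀ (x : V) (p : Quiver.Path x x), p.length = 0)
    (s : V) (hs : ∀ y : V, IsEmpty (s ⟶ y))
    (huniq : ∀ t : V, (∀ y : V, IsEmpty (t ⟶ y)) → t = s)
    (hlink : ∀ x : V, LinkConnected R x) :
    ∀ (a b : CategoryTheory.Quotient (GammaRel R)) (f g : a ⟶ b), f = g := by
  let π x : Path x s := (exists_path_to_sink hacyclic huniq x).some
  let N (X : Quiver.FreeGroupoid V) := pathClass R (π X.as)
  have hN {a b : V} (e : a ⟶ b) :
      (Quotient.functor (GammaRel R)).map ((FreeGroupoid.of V).map e) ≫ N ⟨b⟩ = N ⟨a⟩ := by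
    rw [← evalPath_toPath, ← pathClass_comp]
    exact pathsAgree_sink R hacyclic huniq hlink a _ _
  rintro ⟨X⟩ ⟨Y⟩ f g
  obtain ⟨f, rfl⟩ := (Quotient.functor (GammaRel R)).map_surjective f
  obtain ⟨g, rfl⟩ := (Quotient.functor (GammaRel R)).map_surjective g
  rw [FreeGroupoid.map_eq_comp_inv _ N hN f, FreeGroupoid.map_eq_comp_inv _ N hN g]

end Stmt6
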